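/- For fixed λ₀, λ₁, μ₀, μ₁ ≥ 0 and priors P(H₀), P(H₁), the map taking four families of conditional densities (p₀^D, p₁^D, p₀^E, p₁^E) to the optimal (policy-minimized) unconstrained NP cost ∫ min{D₀^{NP}(x), D₁^{NP}(x)} dx, where Dᵢ^{NP}(x) = λ_{1−i} P(H_{1−i}) p^D(x|H_{1−i}) + μᵢ P(Hᵢ) Var_{p^E}(Θᵢ|Hᵢ,x) p^E(x|Hᵢ), is concave in the densities (viewed pointwise through the scalar function ρ^{NP} of Eq. (13), which is continuous, concave, and positively homogeneous). -/
import Mathlib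


open Finset

/-- Dot product of two vectors in `ℝ^N`. -/
def dotR {N : ℕ} (x y : Fin N → ℝ) : ℝ := ∑ i, x i * y i

lemma dotR_smul {N : ℕ} (w : Fin N → ℝ) (c : ℝ) (x : Fin N → ℝ) :
    dotR w (c • x) = c * dotR w x := by
  simp only [dotR, Pi.smul_apply, smul_eq_mul, Finset.mul_sum]
  exact Finset.sum_congr rfl fun i _ => by ring

lemma dotR_comb {N : ℕ} (w : Fin N → ℝ) (a b : ℝ) (x y : Fin N → ℝ) :
    dotR w (a • x + b • y) = a * dotR w x + b * dotR w y := by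
  simp only [dotR, Pi.add_apply, Pi.smul_apply, smul_eq_mul, Finset.mul_sum,
    ← Finset.sum_add_distrib]
  exact Finset.sum_congr rfl fun i _ => by ring

lemma pos_comb {a b u v : ℝ} (ha : 0 ≤ a) (hb : 0 ≤ b) (hab : a + b = 1)
    (hu : 0 < u) (hv : 0 < v) : 0 < a * u + b * v := by
  rcases ha.lt_or_eq with h | h
  · nlinarith [mul_nonneg hb hv.le]
  · have hb1 : b = 1 := by linarith
    nlinarith

lemma quad_lin {p q u v a b : ℝ} (hu : 0 < u) (hv : 0 < v) (ha : 0 ≤ a) (hb : 0 ≤ b)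
    (hab : a + b = 1) :
    (a * p + b * q) ^ 2 / (a * u + b * v) ≤ a * (p ^ 2 / u) + b * (q ^ 2 / v) := by
  have hden := pos_comb ha hb hab hu hv
  have huv : 0 < u * v := mul_pos hu hv
  have key : (a * p + b * q) ^ 2 * (u * v) ≤
      (a * (p ^ 2 * v) + b * (q ^ 2 * u)) * (a * u + b * v) := by
    nlinarith [sq_nonneg (p * v - q * u), mul_nonneg ha hb]
  have h1 : (a * p + b * q) ^ 2 / (a * u + b * v) ≤
      (a * (p ^ 2 * v) + b * (q ^ 2 * u)) / (u * v) :=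
    (div_le_div_iff₀ hden huv).2 key
  have h2 : (a * (p ^ 2 * v) + b * (q ^ 2 * u)) / (u * v) = a * (p ^ 2 / u) + b * (q ^ 2 / v) := by
    field_simp
  rw [h2] at h1; exact h1

lemma branch_ineq {M L Ax Ay Bx By Cx Cy Lx Ly a b : ℝ} (hM : 0 ≤ M)
    (hCx : 0 < Cx) (hCy : 0 < Cy) (ha : 0 ≤ a) (hb : 0 ≤ b) (hab : a + b = 1) :
    a * (M * (Ax - Bx ^ 2 / Cx) + L * Lx) + b * (M * (Ay - By ^ 2 / Cy) + L * Ly)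
      ≤ M * ((a * Ax + b * Ay) - (a * Bx + b * By) ^ 2 / (a * Cx + b * Cy)) +
        L * (a * Lx + b * Ly) := by
  have h := quad_lin (p := Bx) (q := By) hCx hCy ha hb hab
  nlinarith [mul_le_mul_of_nonneg_left h hM]

lemma cont_dot {N : ℕ} (w : Fin N → ℝ) : Continuous fun x : Fin N → ℝ => dotR w x := by
  unfold dotR
  exact continuous_finset_sum _ fun i _ => (continuous_const.mul (continuous_apply i))

lemma homog_aux {M L A B C Lx c : ℝ} (hC : 0 < C) (hc : 0 < c) :
    M * (c * A - (c * B) ^ 2 / (c * C)) + L * (c * Lx)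
      = c * (M * (A - B ^ 2 / C) + L * Lx) := by
  have h : (c * B) ^ 2 / (c * C) = c * (B ^ 2 / C) := by
    rw [mul_pow]
    field_simp
  rw [h]; ring

/-- the scalar function `ρ^{NP}` underlying the policy-minimized unconstrained
NP cost, namely `ρ^{NP} = min{D̃₀^{NP}, D̃₁^{NP}}` with
`D̃ᵢ^{NP} = μᵢ P(Hᵢ)(aᵢᵀ sᵢ^E − (bᵢᵀ sᵢ^E)²/(cᵢᵀ sᵢ^E)) + λ_{1−i} P(H_{1−i}) c_{1−i}ᵀ s_{1−i}^D`,
is continuous, concave and positively homogeneous of degree 1 jointly in its four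
vector arguments `(s₀^D, s₁^D, s₀^E, s₁^E)` on the domain of nonnegative vectors with
`cᵢᵀ sᵢ^E > 0`. -/
theorem rhoNP_continuous_concave_homogeneous {N₀ N₁ : ℕ}
    (a₀ b₀ c₀ : Fin N₀ → ℝ) (a₁ b₁ c₁ : Fin N₁ → ℝ)
    (ha₀ : ∀ i, 0 ≤ a₀ i) (hb₀ : ∀ i, 0 ≤ b₀ i) (hc₀ : ∀ i, 0 ≤ c₀ i)
    (ha₁ : ∀ i, 0 ≤ a₁ i) (hb₁ : ∀ i, 0 ≤ b₁ i) (hc₁ : ∀ i, 0 ≤ c₁ i)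
    (P₀ P₁ lam₀ lam₁ mu₀ mu₁ : ℝ)
    (hP₀ : 0 ≤ P₀) (hP₁ : 0 ≤ P₁) (hlam₀ : 0 ≤ lam₀) (hlam₁ : 0 ≤ lam₁)
    (hmu₀ : 0 ≤ mu₀) (hmu₁ : 0 ≤ mu₁)
    (S : Set ((Fin N₀ → ℝ) × (Fin N₁ → ℝ) × (Fin N₀ → ℝ) × (Fin N₁ → ℝ)))
    (hS : S = {s | (∀ i, 0 ≤ s.1 i) ∧ (∀ i, 0 ≤ s.2.1 i) ∧ (∀ i, 0 ≤ s.2.2.1 i) ∧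
      (∀ i, 0 ≤ s.2.2.2 i) ∧ 0 < dotR c₀ s.2.2.1 ∧ 0 < dotR c₁ s.2.2.2})
    (ρ : ((Fin N₀ → ℝ) × (Fin N₁ → ℝ) × (Fin N₀ → ℝ) × (Fin N₁ → ℝ)) → ℝ)
    (hρ : ∀ s, ρ s = min
      (mu₀ * P₀ * (dotR a₀ s.2.2.1 - (dotR b₀ s.2.2.1)^2 / dotR c₀ s.2.2.1) +
        lam₁ * P₁ * dotR c₁ s.2.1)
      (mu₁ * P₁ * (dotR a₁ s.2.2.2 - (dotR b₁ s.2.2.2)^2 / dotR c₁ s.2.2.2) +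
        lam₀ * P₀ * dotR c₀ s.1)) :
    ContinuousOn ρ S ∧ ConcaveOn ℝ S ρ ∧
    (∀ c : ℝ, 0 < c → ∀ s ∈ S, ρ (c • s) = c * ρ s) := by
  have hρfun : ρ = fun s => min
      (mu₀ * P₀ * (dotR a₀ s.2.2.1 - (dotR b₀ s.2.2.1)^2 / dotR c₀ s.2.2.1) +
        lam₁ * P₁ * dotR c₁ s.2.1)
      (mu₁ * P₁ * (dotR a₁ s.2.2.2 - (dotR b₁ s.2.2.2)^2 / dotR c₁ s.2.2.2) +
        lam₀ * P₀ * dotR c₀ s.1) := funext hρ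
  -- continuity of the eight composite dot products
  have hp1 : Continuous fun s : ((Fin N₀ → ℝ) × (Fin N₁ → ℝ) × (Fin N₀ → ℝ) × (Fin N₁ → ℝ)) =>
      s.1 := continuous_fst
  have hp21 : Continuous fun s : ((Fin N₀ → ℝ) × (Fin N₁ → ℝ) × (Fin N₀ → ℝ) × (Fin N₁ → ℝ)) =>
      s.2.1 := continuous_fst.comp continuous_snd
  have hp221 : Continuous fun s : ((Fin N₀ → ℝ) × (Fin N₁ → ℝ) × (Fin N₀ → ℝ) × (Fin N₁ → ℝ)) =>
      s.2.2.1 := continuous_fst.comp (continuous_snd.comp continuous_snd)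
  have hp222 : Continuous fun s : ((Fin N₀ → ℝ) × (Fin N₁ → ℝ) × (Fin N₀ → ℝ) × (Fin N₁ → ℝ)) =>
      s.2.2.2 := continuous_snd.comp (continuous_snd.comp continuous_snd)
  refine ⟨?_, ⟨?_, ?_⟩, ?_⟩
  · -- continuity
    rw [hρfun]
    refine ContinuousOn.inf ?_ ?_
    · apply ContinuousOn.add
      · apply ContinuousOn.mul continuousOn_const
        apply ContinuousOn.sub (((cont_dot a₀).comp hp221).continuousOn)
        apply ContinuousOn.div
          ((((cont_dot b₀).comp hp221).pow 2).continuousOn)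
          (((cont_dot c₀).comp hp221).continuousOn)
        intro s hs
        rw [hS] at hs
        exact ne_of_gt hs.2.2.2.2.1
      · exact (continuous_const.mul ((cont_dot c₁).comp hp21)).continuousOn
    · apply ContinuousOn.add
      · apply ContinuousOn.mul continuousOn_const
        apply ContinuousOn.sub (((cont_dot a₁).comp hp222).continuousOn)
        apply ContinuousOn.div
          ((((cont_dot b₁).comp hp222).pow 2).continuousOn)
          (((cont_dot c₁).comp hp222).continuousOn)
        intro s hs
        rw [hS] at hs
        exact ne_of_gt hs.2.2.2.2.2
      · exact (continuous_const.mul ((cont_dot c₀).comp hp1)).continuousOn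
  · -- convexity of S
    intro x hx y hy a b ha hb hab
    rw [hS] at hx hy ⊢
    obtain ⟨hx1, hx2, hx3, hx4, hx5, hx6⟩ := hx
    obtain ⟨hy1, hy2, hy3, hy4, hy5, hy6⟩ := hy
    refine ⟨?_, ?_, ?_, ?_, ?_, ?_⟩
    · intro i
      have : (a • x + b • y).1 i = a * x.1 i + b * y.1 i := rfl
      rw [this]
      exact add_nonneg (mul_nonneg ha (hx1 i)) (mul_nonneg hb (hy1 i))
    · intro i
      have : (a • x + b • y).2.1 i = a * x.2.1 i + b * y.2.1 i := rfl
      rw [this]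
      exact add_nonneg (mul_nonneg ha (hx2 i)) (mul_nonneg hb (hy2 i))
    · intro i
      have : (a • x + b • y).2.2.1 i = a * x.2.2.1 i + b * y.2.2.1 i := rfl
      rw [this]
      exact add_nonneg (mul_nonneg ha (hx3 i)) (mul_nonneg hb (hy3 i))
    · intro i
      have : (a • x + b • y).2.2.2 i = a * x.2.2.2 i + b * y.2.2.2 i := rfl
      rw [this]
      exact add_nonneg (mul_nonneg ha (hx4 i)) (mul_nonneg hb (hy4 i))
    · have : (a • x + b • y).2.2.1 = a • x.2.2.1 + b • y.2.2.1 := rfl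
      rw [this, dotR_comb]
      exact pos_comb ha hb hab hx5 hy5
    · have : (a • x + b • y).2.2.2 = a • x.2.2.2 + b • y.2.2.2 := rfl
      rw [this, dotR_comb]
      exact pos_comb ha hb hab hx6 hy6
  · -- concavity inequality
    intro x hx y hy a b ha hb hab
    rw [hS] at hx hy
    have e1 : (a • x + b • y).1 = a • x.1 + b • y.1 := rfl
    have e21 : (a • x + b • y).2.1 = a • x.2.1 + b • y.2.1 := rfl
    have e221 : (a • x + b • y).2.2.1 = a • x.2.2.1 + b • y.2.2.1 := rfl
    have e222 : (a • x + b • y).2.2.2 = a • x.2.2.2 + b • y.2.2.2 := rfl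
    rw [hρ, hρ, hρ, e1, e21, e221, e222, dotR_comb, dotR_comb, dotR_comb, dotR_comb,
      dotR_comb, dotR_comb, dotR_comb, dotR_comb]
    simp only [smul_eq_mul]
    have k₀ : a * (mu₀ * P₀ * (dotR a₀ x.2.2.1 - (dotR b₀ x.2.2.1)^2 / dotR c₀ x.2.2.1) +
          lam₁ * P₁ * dotR c₁ x.2.1) +
        b * (mu₀ * P₀ * (dotR a₀ y.2.2.1 - (dotR b₀ y.2.2.1)^2 / dotR c₀ y.2.2.1) +
          lam₁ * P₁ * dotR c₁ y.2.1) ≤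
        mu₀ * P₀ * ((a * dotR a₀ x.2.2.1 + b * dotR a₀ y.2.2.1) -
          (a * dotR b₀ x.2.2.1 + b * dotR b₀ y.2.2.1)^2 /
            (a * dotR c₀ x.2.2.1 + b * dotR c₀ y.2.2.1)) +
        lam₁ * P₁ * (a * dotR c₁ x.2.1 + b * dotR c₁ y.2.1) :=
      branch_ineq (mul_nonneg hmu₀ hP₀) hx.2.2.2.2.1 hy.2.2.2.2.1 ha hb hab
    have k₁ : a * (mu₁ * P₁ * (dotR a₁ x.2.2.2 - (dotR b₁ x.2.2.2)^2 / dotR c₁ x.2.2.2) +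
          lam₀ * P₀ * dotR c₀ x.1) +
        b * (mu₁ * P₁ * (dotR a₁ y.2.2.2 - (dotR b₁ y.2.2.2)^2 / dotR c₁ y.2.2.2) +
          lam₀ * P₀ * dotR c₀ y.1) ≤
        mu₁ * P₁ * ((a * dotR a₁ x.2.2.2 + b * dotR a₁ y.2.2.2) -
          (a * dotR b₁ x.2.2.2 + b * dotR b₁ y.2.2.2)^2 /
            (a * dotR c₁ x.2.2.2 + b * dotR c₁ y.2.2.2)) +
        lam₀ * P₀ * (a * dotR c₀ x.1 + b * dotR c₀ y.1) :=
      branch_ineq (mul_nonneg hmu₁ hP₁) hx.2.2.2.2.2 hy.2.2.2.2.2 ha hb hab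
    apply le_min
    · calc a * min _ _ + b * min _ _ ≤ _ :=
            add_le_add (mul_le_mul_of_nonneg_left (min_le_left _ _) ha)
              (mul_le_mul_of_nonneg_left (min_le_left _ _) hb)
        _ ≤ _ := k₀
    · calc a * min _ _ + b * min _ _ ≤ _ :=
            add_le_add (mul_le_mul_of_nonneg_left (min_le_right _ _) ha)
              (mul_le_mul_of_nonneg_left (min_le_right _ _) hb)
        _ ≤ _ := k₁
  · -- homogeneity
    intro c hc s hs
    rw [hS] at hs
    have e1 : (c • s).1 = c • s.1 := rfl
    have e21 : (c • s).2.1 = c • s.2.1 := rfl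
    have e221 : (c • s).2.2.1 = c • s.2.2.1 := rfl
    have e222 : (c • s).2.2.2 = c • s.2.2.2 := rfl
    rw [hρ, hρ, e1, e21, e221, e222, dotR_smul, dotR_smul, dotR_smul, dotR_smul,
      dotR_smul, dotR_smul, dotR_smul, dotR_smul,
      homog_aux hs.2.2.2.2.1 hc, homog_aux hs.2.2.2.2.2 hc,
      mul_min_of_nonneg _ _ hc.le]
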